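/- arXiv:1710.01021 — 4 statements merged into one kernel-verified Lean document; each statement's English description precedes it below -/
import Mathlib

section
/- Let K be a number field and A a flat O_K-algebra. Then for every Witt vector ξ ∈ W_{O_K}(A) and all nonzero prime ideals p, q ∈ P_K: (i) ψ_p ξ ∈ W_{O_K}(A), i.e. W_{O_K}(A) is closed under the shift operators; (ii) ψ_p ψ_q ξ = ψ_q ψ_p ξ; and (iii) ψ_p ξ − ξ^{#k_p} ∈ p·W_{O_K}(A). -/
open NumberField

noncomputable section

/-- The multiplicative monoid `I_K` of nonzero ideals of the ring of integers of `K`. -/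
def IdealMonoid (K : Type) [Field K] [NumberField K] : Submonoid (Ideal (𝓞 K)) where
  carrier := {I | I ≠ ⊥}
  mul_mem' := by
    intro a b ha hb h
    rcases Ideal.mul_eq_bot.mp h with h' | h'
    · exact ha h'
    · exact hb h'
  one_mem' := by
    simp only [Set.mem_setOf_eq, Ideal.one_eq_top]
    exact top_ne_bot

/-- `I_K`, the monoid of nonzero ideals, as a type. -/
abbrev IK (K : Type) [Field K] [NumberField K] := ↥(IdealMonoid K)

/-- `P_K`, the set of nonzero prime ideals of `𝓞 K`, as a type. -/
def PrimeIdeal (K : Type) [Field K] [NumberField K] :=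
  {p : Ideal (𝓞 K) // p.IsPrime ∧ p ≠ ⊥}

/-- A nonzero prime ideal, regarded as an element of `I_K`. -/
def PrimeIdeal.toIK {K : Type} [Field K] [NumberField K] (p : PrimeIdeal K) : IK K :=
  ⟨p.1, p.2.2⟩

/-- `#k_p`: the cardinality of the residue ring `R ⧸ p`. -/
def residueCard {R : Type} [CommRing R] (p : Ideal R) : ℕ :=
  Nat.card (R ⧸ p)

/-- The shift operator `ψ_a` on `A^{I_K}`: `(ψ_a ξ)_b = ξ_{a·b}`. -/
def shift {K : Type} [Field K] [NumberField K] {A : Type} (a : IK K)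
    (ξ : IK K → A) : IK K → A :=
  fun b => ξ (a * b)

/-- For an ideal `p` of `𝓞 K` and a subset `S ⊆ A^{I_K}`, the set `p·S` of all finite
sums of products of elements of `p` with elements of (the module generated by) `S`. -/
def idealMulSet {K : Type} [Field K] [NumberField K] {A : Type} [CommRing A]
    [Algebra (𝓞 K) A] (p : Ideal (𝓞 K)) (S : Set (IK K → A)) : Set (IK K → A) :=
  ↑(p • Submodule.span (𝓞 K) S)

/-- The descending chain `U_n(A)` of subsets of `A^{I_K}`. -/
def UnSet (K : Type) [Field K] [NumberField K] (A : Type) [CommRing A]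
    [Algebra (𝓞 K) A] : ℕ → Set (IK K → A)
  | 0 => Set.univ
  | n + 1 => {ξ | ξ ∈ UnSet K A n ∧ ∀ p : PrimeIdeal K,
      shift p.toIK ξ - ξ ^ residueCard p.1 ∈ idealMulSet p.1 (UnSet K A n)}

/-- The ring of Witt vectors `W_{O_K}(A) = ⋂ₙ U_n(A)`, as a subset of `A^{I_K}`. -/
def WittSet (K : Type) [Field K] [NumberField K] (A : Type) [CommRing A]
    [Algebra (𝓞 K) A] : Set (IK K → A) :=
  ⋂ n, UnSet K A n

/-- A deterministic finite automaton with output, over input alphabet `Δ` and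
output alphabet `O`. -/
structure DFAO (Δ O : Type) : Type 1 where
  State : Type
  [finState : Finite State]
  trans : State → Δ → State
  start : State
  out : State → O

/-- The output of a DFAO on an input word, processing letters from left to right. -/
def DFAO.output {Δ O : Type} (M : DFAO Δ O) (l : List Δ) : O :=
  M.out (l.foldl M.trans M.start)

/-- `ξ ∈ A^{I_K}` is automatic if some DFAO with input alphabet `P_K` and output
alphabet `A` produces `ξ_a` from every word of primes whose product is `a`. -/
def IsAutomatic {K : Type} [Field K] [NumberField K] {A : Type}
    (ξ : IK K → A) : Prop :=
  ∃ M : DFAO (PrimeIdeal K) A, ∀ (l : List (PrimeIdeal K)) (a : IK K),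
    (a : Ideal (𝓞 K)) = (l.map Subtype.val).prod → ξ a = M.output l

/-- `v_p(a)`: the largest `e` such that `p^e` divides `a`. -/
def vIdeal {R : Type} [CommRing R] (p a : Ideal R) : ℕ :=
  sSup {e : ℕ | p ^ e ∣ a}

/-!
Each `U_n(A)` is an `𝓞 K`-subalgebra: for `p` over the rational prime `ℓ` we have `ℓ ∈ p`,
`#k_p` is a power of `ℓ`, `(x + y)^{#k_p} ≡ x^{#k_p} + y^{#k_p} mod ℓ`, and `c^{#k_p} ≡ c mod p`
on `𝓞 K`. Hence `ξ ∈ U_{n+1}(A)` gives `ψ_p ξ = (ψ_p ξ - ξ^{#k_p}) + ξ^{#k_p} ∈ U_n(A)`, which is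
(i); (ii) is the commutativity of `I_K`. For (iii), `ψ_p ξ - ξ^{#k_p}` lies in `p·U_n(A)` for
every `n`, and `p·(-)` commutes with the intersection: writing `p J = (d)` with `d ≠ 0`,
multiplication by `J` turns `p·(-)` into `d·(-)`, which commutes with intersections because `d` is
a nonzerodivisor on the flat, hence torsion-free, `A`.
-/

open Pointwise

theorem Submodule.iInf_smul_le_smul_iInf {R M ι : Type*} [CommRing R] [AddCommGroup M]
    [Module R M] [Nonempty ι] {p J : Ideal R} {d : R} (hpJ : p * J = Ideal.span {d})
    (hd : IsSMulRegular M d) (T : ι → Submodule R M) :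
    ⨅ i, p • T i ≤ p • ⨅ i, T i := by
  set f := DistribSMul.toLinearMap R M d
  have hJp : ∀ N : Submodule R M, J • p • N = N.map f := fun N => by
    rw [← Submodule.mul_smul, mul_comm, hpJ, Submodule.ideal_span_singleton_smul]; rfl
  rw [← Submodule.map_le_map_iff_of_injective (f := f) hd, ← hJp]
  calc J • p • ⨅ i, p • T i = p • J • ⨅ i, p • T i := by
        rw [← Submodule.mul_smul, mul_comm, Submodule.mul_smul]
    _ ≤ p • ⨅ i, J • p • T i :=
        smul_mono_right _ (le_iInf fun i => smul_mono_right _ (iInf_le _ i))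
    _ = (p • ⨅ i, T i).map f := by
        simp only [hJp, ← Submodule.map_iInf f hd, Submodule.map_smul'']

theorem Submodule.iInf_smul_le_smul_iInf_of_ne_bot {R M ι : Type*} [CommRing R]
    [IsDedekindDomain R] [AddCommGroup M] [Module R M] [Module.IsTorsionFree R M] [Nonempty ι]
    {p : Ideal R} (hp : p ≠ ⊥) (T : ι → Submodule R M) :
    ⨅ i, p • T i ≤ p • ⨅ i, T i := by
  obtain ⟨d, hdp, hd0⟩ := (Submodule.ne_bot_iff p).mp hp
  obtain ⟨J, hJ⟩ : p ∣ Ideal.span {d} :=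
    Ideal.dvd_iff_le.mpr ((Ideal.span_singleton_le_iff_mem _).mpr hdp)
  exact Submodule.iInf_smul_le_smul_iInf hJ.symm (IsSMulRegular.of_ne_zero hd0) T

namespace Ideal

variable {R : Type} [CommRing R] (I : Ideal R) [Finite (R ⧸ I)]

theorem pow_residueCard_sub_self_mem [I.IsMaximal] (c : R) : c ^ residueCard I - c ∈ I := by
  let := Ideal.Quotient.field I
  have := Fintype.ofFinite (R ⧸ I)
  rw [← Ideal.Quotient.eq_zero_iff_mem, map_sub, map_pow, residueCard, Nat.card_eq_fintype_card,
    FiniteField.pow_card, sub_self]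

theorem exists_prime_natCast_mem_residueCard_eq_pow [I.IsMaximal] :
    ∃ ℓ f : ℕ, ℓ.Prime ∧ (ℓ : R) ∈ I ∧ residueCard I = ℓ ^ f := by
  let := Ideal.Quotient.field I
  have := Fintype.ofFinite (R ⧸ I)
  obtain ⟨f, hℓ, hcard⟩ := FiniteField.card (R ⧸ I) (ringChar (R ⧸ I))
  refine ⟨ringChar (R ⧸ I), f, hℓ, ?_, by rw [residueCard, Nat.card_eq_fintype_card, hcard]⟩
  rw [← Ideal.Quotient.eq_zero_iff_mem, map_natCast]
  exact ringChar.Nat.cast_ringChar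

theorem residueCard_ne_zero : residueCard I ≠ 0 := Nat.card_pos.ne'

end Ideal

namespace Subalgebra

variable {R B : Type} [CommRing R] [CommRing B] [Algebra R B] (S : Subalgebra R B) (I : Ideal R)

theorem mul_mem_ideal_smul {x y : B} (hx : x ∈ I • toSubmodule S) (hy : y ∈ S) :
    x * y ∈ I • toSubmodule S := by
  refine Submodule.smul_induction_on hx (fun c hc z hz => ?_) (fun z w hz hw => ?_)
  · rw [smul_mul_assoc]; exact Submodule.smul_mem_smul hc (S.mul_mem hz hy)
  · rw [add_mul]; exact add_mem hz hw

theorem mem_of_sub_mem_ideal_smul {x y : B} (h : x - y ∈ I • toSubmodule S) (hy : y ∈ S) :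
    x ∈ S := by
  simpa using S.add_mem (Submodule.smul_le_right h) hy

theorem add_pow_residueCard_sub_mem [I.IsMaximal] [Finite (R ⧸ I)] {x y : B} (hx : x ∈ S)
    (hy : y ∈ S) :
    (x + y) ^ residueCard I - x ^ residueCard I - y ^ residueCard I ∈ I • toSubmodule S := by
  obtain ⟨ℓ, f, hℓ, hℓI, hq⟩ := I.exists_prime_natCast_mem_residueCard_eq_pow
  obtain ⟨r, hr⟩ := exists_add_pow_prime_pow_eq hℓ (⟨x, hx⟩ : S) ⟨y, hy⟩ f
  have hr' := congrArg Subtype.val hr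
  push_cast at hr'
  have hdiff : (x + y) ^ ℓ ^ f - x ^ ℓ ^ f - y ^ ℓ ^ f = (ℓ : R) • (x * y * r) := by
    rw [hr', Algebra.smul_def, map_natCast]; ring
  rw [hq, hdiff]
  exact Submodule.smul_mem_smul hℓI (S.mul_mem (S.mul_mem hx hy) r.2)

def frobeniusCongr {ι : Type} (ψ : ι → B →ₐ[R] B) (I : ι → Ideal R) [∀ i, (I i).IsMaximal]
    [∀ i, Finite (R ⧸ I i)] : Subalgebra R B where
  carrier := {x | x ∈ S ∧ ∀ i, ψ i x - x ^ residueCard (I i) ∈ I i • toSubmodule S}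
  mul_mem' {x y} hx hy := by
    refine ⟨S.mul_mem hx.1 hy.1, fun i => ?_⟩
    have hψy : ψ i y ∈ S := S.mem_of_sub_mem_ideal_smul _ (hy.2 i) (S.pow_mem hy.1 _)
    have h : ψ i (x * y) - (x * y) ^ residueCard (I i) =
        (ψ i x - x ^ residueCard (I i)) * ψ i y
          + (ψ i y - y ^ residueCard (I i)) * x ^ residueCard (I i) := by
      rw [map_mul, mul_pow]; ring
    rw [h]
    exact add_mem (S.mul_mem_ideal_smul _ (hx.2 i) hψy)
      (S.mul_mem_ideal_smul _ (hy.2 i) (S.pow_mem hx.1 _))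
  one_mem' := ⟨S.one_mem, fun i => by simp⟩
  add_mem' {x y} hx hy := by
    refine ⟨S.add_mem hx.1 hy.1, fun i => ?_⟩
    have h : ψ i (x + y) - (x + y) ^ residueCard (I i) =
        (ψ i x - x ^ residueCard (I i)) + (ψ i y - y ^ residueCard (I i))
          - ((x + y) ^ residueCard (I i) - x ^ residueCard (I i) - y ^ residueCard (I i)) := by
      rw [map_add]; ring
    rw [h]
    exact sub_mem (add_mem (hx.2 i) (hy.2 i)) (S.add_pow_residueCard_sub_mem _ hx.1 hy.1)
  zero_mem' := ⟨S.zero_mem, fun i => by simp [(I i).residueCard_ne_zero]⟩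
  algebraMap_mem' c := by
    refine ⟨S.algebraMap_mem c, fun i => ?_⟩
    rw [AlgHom.commutes, ← map_pow, ← map_sub, Algebra.algebraMap_eq_smul_one, ← neg_sub]
    exact Submodule.smul_mem_smul (neg_mem ((I i).pow_residueCard_sub_self_mem c)) S.one_mem

theorem map_mem_of_mem_frobeniusCongr {ι : Type} {ψ : ι → B →ₐ[R] B} {I : ι → Ideal R}
    [∀ i, (I i).IsMaximal] [∀ i, Finite (R ⧸ I i)] {x : B} (hx : x ∈ S.frobeniusCongr ψ I)
    (i : ι) : ψ i x ∈ S :=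
  S.mem_of_sub_mem_ideal_smul _ (hx.2 i) (S.pow_mem hx.1 _)

end Subalgebra

theorem idealMulSet_coe_submodule {K : Type} [Field K] [NumberField K] {A : Type} [CommRing A]
    [Algebra (𝓞 K) A] (p : Ideal (𝓞 K)) (N : Submodule (𝓞 K) (IK K → A)) :
    idealMulSet p (N : Set (IK K → A)) = ↑(p • N) := by
  rw [idealMulSet, Submodule.span_eq]

namespace PrimeIdeal

variable {K : Type} [Field K] [NumberField K]

instance isMaximal (p : PrimeIdeal K) : p.1.IsMaximal := p.2.1.isMaximal p.2.2

instance finite_quotient (p : PrimeIdeal K) : Finite (𝓞 K ⧸ p.1) :=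
  Ideal.finiteQuotientOfFreeOfNeBot p.1 p.2.2

end PrimeIdeal

section WittLevel

variable (K : Type) [Field K] [NumberField K] (A : Type) [CommRing A] [Algebra (𝓞 K) A]

def shiftAlgHom (a : IK K) : (IK K → A) →ₐ[𝓞 K] (IK K → A) :=
  AlgHom.pi fun b => Pi.evalAlgHom _ _ (a * b)

def wittLevel : ℕ → Subalgebra (𝓞 K) (IK K → A)
  | 0 => ⊤
  | n + 1 => (wittLevel n).frobeniusCongr (fun p : PrimeIdeal K => shiftAlgHom K A p.toIK) (·.1)

theorem coe_wittLevel (n : ℕ) : (wittLevel K A n : Set (IK K → A)) = UnSet K A n := by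
  induction n with
  | zero => rfl
  | succ n ih =>
    ext ξ
    simp only [UnSet, ← ih, ← Subalgebra.coe_toSubmodule, idealMulSet_coe_submodule]
    rfl

theorem wittSet_eq_iInf_wittLevel :
    WittSet K A = ↑(⨅ n, Subalgebra.toSubmodule (wittLevel K A n)) := by
  simp only [WittSet, ← coe_wittLevel, Submodule.coe_iInf, Subalgebra.coe_toSubmodule]

end WittLevel

/-- for a number field `K` and a flat `𝓞 K`-algebra `A`, the ring of Witt
vectors `W_{O_K}(A)` is closed under the shift operators `ψ_p`, the shifts commute, and
`ψ_p ξ - ξ^{#k_p} ∈ p·W_{O_K}(A)`. -/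
theorem witt_shift_closed_comm_frobenius (K : Type) [Field K] [NumberField K]
    (A : Type) [CommRing A] [Algebra (𝓞 K) A] [Module.Flat (𝓞 K) A]
    (ξ : IK K → A) (hξ : ξ ∈ WittSet K A) (p q : PrimeIdeal K) :
    shift p.toIK ξ ∈ WittSet K A ∧
    shift p.toIK (shift q.toIK ξ) = shift q.toIK (shift p.toIK ξ) ∧
    shift p.toIK ξ - ξ ^ residueCard p.1 ∈ idealMulSet p.1 (WittSet K A) := by
  have hlevel : ∀ n, ξ ∈ wittLevel K A n := fun n => by
    rw [← SetLike.mem_coe, coe_wittLevel]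
    exact Set.mem_iInter.mp hξ n
  refine ⟨Set.mem_iInter.mpr fun n => ?_, funext fun b => congrArg ξ (mul_left_comm _ _ _), ?_⟩
  · rw [← coe_wittLevel]
    exact Subalgebra.map_mem_of_mem_frobeniusCongr _ (hlevel (n + 1)) p
  · rw [wittSet_eq_iInf_wittLevel, idealMulSet_coe_submodule]
    exact Submodule.iInf_smul_le_smul_iInf_of_ne_bot p.2.2 _
      (Submodule.mem_iInf _ |>.mpr fun n => (hlevel (n + 1)).2 p)

end
end

section
/- Let K be a number field and A an O_K-algebra. If B ⊆ A^{I_K} is an O_K-subalgebra such that for every ξ ∈ B and every p ∈ P_K one has ψ_p ξ ∈ B and ψ_p ξ − ξ^{#k_p} ∈ p·B, then B ⊆ W_{O_K}(A). In other words, W_{O_K}(A) is the largest sub-Λ-ring of A^{I_K}. -/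
open NumberField

noncomputable section

lemma idealMulSet_mono {K : Type} [Field K] [NumberField K] {A : Type} [CommRing A]
    [Algebra (𝓞 K) A] (p : Ideal (𝓞 K)) {S T : Set (IK K → A)} (h : S ⊆ T) :
    idealMulSet p S ⊆ idealMulSet p T := by
  have : p • Submodule.span (𝓞 K) S ≤ p • Submodule.span (𝓞 K) T :=
    Submodule.smul_mono le_rfl (Submodule.span_mono h)
  exact this

/-- `W_{O_K}(A)` is the largest sub-Λ-ring of `A^{I_K}`: any
`𝓞 K`-subalgebra `B` of `A^{I_K}` closed under the shifts `ψ_p` and satisfying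
`ψ_p ξ - ξ^{#k_p} ∈ p·B` for all `ξ ∈ B` and `p ∈ P_K` is contained in `W_{O_K}(A)`. -/
theorem witt_maximal_sub_lambda_ring (K : Type) [Field K] [NumberField K]
    (A : Type) [CommRing A] [Algebra (𝓞 K) A]
    (B : Subalgebra (𝓞 K) (IK K → A))
    (hshift : ∀ ξ ∈ B, ∀ p : PrimeIdeal K, shift p.toIK ξ ∈ B)
    (hfrob : ∀ ξ ∈ B, ∀ p : PrimeIdeal K,
      shift p.toIK ξ - ξ ^ residueCard p.1 ∈ idealMulSet p.1 (B : Set (IK K → A))) :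
    (B : Set (IK K → A)) ⊆ WittSet K A := by
  have key : ∀ n, (B : Set (IK K → A)) ⊆ UnSet K A n := by
    intro n
    induction n with
    | zero => intro ξ _; trivial
    | succ n ih =>
      intro ξ hξ
      refine ⟨ih hξ, fun p => ?_⟩
      exact idealMulSet_mono p.1 ih (hfrob ξ hξ p)
  intro ξ hξ
  exact Set.mem_iInter.mpr fun n => key n hξ

end
end

section
/- Let L/K be a finite extension of number fields. For every Witt vector ξ ∈ W_{O_K}(O_L), every ideal a ∈ I_K, every prime p ∈ P_K, and every prime P of O_L lying over p with inertia degree f = f(P|p), one has the congruence ξ_{p^f·a} ≡ ξ_a (mod P^{1+⌊v_p(a)/f⌋}), i.e. ξ_{p^f·a} − ξ_a ∈ P^{1+⌊v_p(a)/f⌋}. -/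
/-!
Modulo `P`, the congruence `ψ_p ξ ≡ ξ^{#k_p}` makes `ψ_p^f` act on coefficients as the `f`-th
power of Frobenius, which is the identity on the residue field `O_L/P` of cardinality `#k_p^f`.
Each factor `p` of `a` then gains one more power of `P`: writing `ψ_p ξ = ξ^{#k_p} + δ` with
`δ ∈ p·U_n`, the difference of the `δ`-terms gets one factor `P` from `p` and the others from the
congruence for `U_n` (induction on `n`), while raising to the power `#k_p ∈ p ⊆ P` adds one factor
`P` to a difference already in `P`. This even gives the modulus `P^{1+v_p(a)}`.
-/

open NumberField

noncomputable section

lemma Ideal.natCast_natCard_quotient_mem {R : Type*} [CommRing R] (I : Ideal R) :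
    (Nat.card (R ⧸ I) : R) ∈ I := by
  rw [← Ideal.Quotient.eq_zero_iff_mem, map_natCast, ← nsmul_one, card_nsmul_eq_zero']

lemma Ideal.pow_natCard_quotient_sub_mem {R : Type*} [CommRing R] (P : Ideal R) [P.IsMaximal]
    [Finite (R ⧸ P)] (x : R) : x ^ Nat.card (R ⧸ P) - x ∈ P := by
  let := Ideal.Quotient.field P
  have := Fintype.ofFinite (R ⧸ P)
  rw [← Ideal.Quotient.eq, map_pow, Nat.card_eq_fintype_card, FiniteField.pow_card]

lemma Ideal.pow_sub_pow_mem {R : Type*} [CommRing R] {I : Ideal R} {x y : R} (h : x - y ∈ I)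
    (n : ℕ) : x ^ n - y ^ n ∈ I := by
  obtain ⟨c, hc⟩ := sub_dvd_pow_sub_pow x y n
  rw [hc]
  exact I.mul_mem_right c h

lemma Ideal.pow_sub_pow_mem_pow_succ {R : Type*} [CommRing R] {I : Ideal R} {x y : R} {q j : ℕ}
    (hq : (q : R) ∈ I) (hj : j ≠ 0) (h : x - y ∈ I ^ j) : x ^ q - y ^ q ∈ I ^ (j + 1) := by
  rw [← geom_sum₂_mul, pow_succ']
  refine Ideal.mul_mem_mul ?_ h
  have hxy : Ideal.Quotient.mk I x = Ideal.Quotient.mk I y :=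
    Ideal.Quotient.eq.mpr (Ideal.pow_le_self hj h)
  rw [← Ideal.Quotient.eq_zero_iff_mem, map_sum]
  simp only [map_mul, map_pow, hxy, geom_sum₂_self, ← map_natCast (Ideal.Quotient.mk I),
    Ideal.Quotient.eq_zero_iff_mem.mpr hq, zero_mul]

lemma vIdeal_bddAbove {R : Type} [CommRing R] [IsDedekindDomain R] {p a : Ideal R}
    (hp : Prime p) (ha : a ≠ ⊥) : BddAbove {e : ℕ | p ^ e ∣ a} := by
  obtain ⟨N, hN⟩ := FiniteMultiplicity.of_prime_left hp ha
  refine ⟨N, fun e he => ?_⟩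
  by_contra h
  exact hN (dvd_trans (pow_dvd_pow p (by omega)) he)

lemma pow_vIdeal_dvd {R : Type} [CommRing R] [IsDedekindDomain R] {p a : Ideal R}
    (hp : Prime p) (ha : a ≠ ⊥) : p ^ vIdeal p a ∣ a :=
  Nat.sSup_mem ⟨0, by simp⟩ (vIdeal_bddAbove hp ha)

lemma PrimeIdeal.exists_eq_pow_vIdeal_mul {K : Type} [Field K] [NumberField K]
    (p : PrimeIdeal K) (a : IK K) : ∃ b : IK K, a = p.toIK ^ vIdeal p.1 a.1 * b := by
  obtain ⟨b, hb⟩ := pow_vIdeal_dvd (Ideal.prime_of_isPrime p.2.2 p.2.1) a.2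
  have hb0 : b ≠ ⊥ := by
    rintro rfl
    exact a.2 (by simpa using hb)
  exact ⟨⟨b, hb0⟩, Subtype.ext (by simpa [PrimeIdeal.toIK] using hb)⟩

section WittCongruence

variable {K : Type} [Field K] [NumberField K] {A : Type} [CommRing A] [Algebra (𝓞 K) A]

lemma map_mem_mul_of_mem_idealMulSet {p : Ideal (𝓞 K)} {P M : Ideal A}
    (hp : p ≤ P.comap (algebraMap (𝓞 K) A)) {S : Set (IK K → A)}
    (φ : (IK K → A) →ₗ[𝓞 K] A) (hS : ∀ η ∈ S, φ η ∈ M) {δ : IK K → A}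
    (hδ : δ ∈ idealMulSet p S) : φ δ ∈ P * M := by
  have hspan : Submodule.span (𝓞 K) S ≤ (M.restrictScalars (𝓞 K)).comap φ :=
    Submodule.span_le.mpr hS
  have hsmul : p • Submodule.span (𝓞 K) S ≤ ((P * M).restrictScalars (𝓞 K)).comap φ :=
    Submodule.smul_le.mpr fun r hr η hη => by
      rw [Submodule.mem_comap, map_smul, Submodule.restrictScalars_mem, Algebra.smul_def]
      exact Ideal.mul_mem_mul (hp hr) (hspan hη)
  exact hsmul hδ

variable (p : PrimeIdeal K) {P : Ideal A} (hp : p.1 ≤ P.comap (algebraMap (𝓞 K) A))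
include hp

lemma apply_mul_sub_pow_mem {n : ℕ} {ξ : IK K → A} (hξ : ξ ∈ UnSet K A (n + 1)) (c : IK K) :
    ξ (p.toIK * c) - ξ c ^ residueCard p.1 ∈ P := by
  simpa [shift] using
    map_mem_mul_of_mem_idealMulSet (M := ⊤) hp (LinearMap.proj c) (fun _ _ => trivial) (hξ.2 p)

lemma apply_pow_mul_sub_pow_mem {n : ℕ} {ξ : IK K → A} (hξ : ξ ∈ UnSet K A (n + 1)) (j : ℕ)
    (c : IK K) : ξ (p.toIK ^ j * c) - ξ c ^ residueCard p.1 ^ j ∈ P := by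
  induction j generalizing c with
  | zero => simp
  | succ j ih =>
    have hpow := Ideal.pow_sub_pow_mem (apply_mul_sub_pow_mem p hp hξ c) (residueCard p.1 ^ j)
    rw [← pow_mul, ← pow_succ'] at hpow
    simpa [pow_succ, mul_assoc] using add_mem (ih (p.toIK * c)) hpow

lemma apply_mul_sub_apply_mul_mem_pow_succ {n e j : ℕ} {ξ : IK K → A}
    (hξ : ξ ∈ UnSet K A (n + 1)) {c d : IK K} (hU : ∀ η ∈ UnSet K A n, η c - η d ∈ P ^ e)
    (hj : j ≠ 0) (hej : e ≤ j) (hcd : ξ c - ξ d ∈ P ^ j) :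
    ξ (p.toIK * c) - ξ (p.toIK * d) ∈ P ^ (e + 1) := by
  have hq : (residueCard p.1 : A) ∈ P := by
    simpa [residueCard] using hp (Ideal.natCast_natCard_quotient_mem p.1)
  have hδ : (ξ (p.toIK * c) - ξ c ^ residueCard p.1) - (ξ (p.toIK * d) - ξ d ^ residueCard p.1)
      ∈ P ^ (e + 1) := by
    rw [pow_succ']
    exact map_mem_mul_of_mem_idealMulSet hp
      (LinearMap.proj (R := 𝓞 K) (φ := fun _ => A) c - LinearMap.proj d) hU (hξ.2 p)
  have hpow : ξ c ^ residueCard p.1 - ξ d ^ residueCard p.1 ∈ P ^ (e + 1) :=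
    Ideal.pow_le_pow_right (by omega) (Ideal.pow_sub_pow_mem_pow_succ hq hj hcd)
  convert add_mem hδ hpow using 1
  ring

variable {f : ℕ} (hfrob : ∀ z : A, z ^ residueCard p.1 ^ f - z ∈ P)
include hfrob

lemma apply_pow_mul_sub_mem {n : ℕ} {ξ : IK K → A} (hξ : ξ ∈ UnSet K A (n + 1)) (c : IK K) :
    ξ (p.toIK ^ f * c) - ξ c ∈ P := by
  simpa using add_mem (apply_pow_mul_sub_pow_mem p hp hξ f c) (hfrob (ξ c))

lemma apply_pow_mul_sub_mem_pow_min (n : ℕ) :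
    ∀ ξ ∈ UnSet K A n, ∀ (k : ℕ) (b : IK K),
      ξ (p.toIK ^ f * (p.toIK ^ k * b)) - ξ (p.toIK ^ k * b) ∈ P ^ min n (k + 1) := by
  induction n with
  | zero => simp
  | succ n ihn =>
    intro ξ hξ k b
    induction k with
    | zero => simpa using apply_pow_mul_sub_mem p hp hfrob hξ b
    | succ k ihk =>
      have hstep := apply_mul_sub_apply_mul_mem_pow_succ p hp hξ (fun η hη => ihn η hη k b)
        (by positivity) (min_le_min_right _ n.le_succ) ihk
      rw [mul_left_comm, ← mul_assoc p.toIK, ← pow_succ'] at hstep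
      rwa [← min_add_add_right] at hstep

end WittCongruence

lemma pow_residueCard_pow_inertiaDeg'_sub_mem {K L : Type} [Field K] [NumberField K] [Field L]
    [NumberField L] [Algebra K L] (p : PrimeIdeal K) {P : Ideal (𝓞 L)} (hP : P.IsPrime)
    (hover : P.comap (algebraMap (𝓞 K) (𝓞 L)) = p.1) (z : 𝓞 L) :
    z ^ residueCard p.1 ^ p.1.inertiaDeg' P - z ∈ P := by
  have : P.LiesOver p.1 := ⟨hover.symm⟩
  have hP0 : P ≠ ⊥ := Ideal.ne_bot_of_liesOver_of_ne_bot p.2.2 P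
  have : P.IsMaximal := hP.isMaximal hP0
  have : Finite (𝓞 L ⧸ P) := Ideal.finiteQuotientOfFreeOfNeBot P hP0
  have hcard : Nat.card (𝓞 L ⧸ P) = residueCard p.1 ^ p.1.inertiaDeg' P := by
    simpa [Ideal.absNorm_apply, Submodule.cardQuot_apply, residueCard] using
      Ideal.absNorm_eq_pow_inertiaDeg'_of_liesOver P p.1 p.2.1 p.2.2
  rw [← hcard]
  exact P.pow_natCard_quotient_sub_mem z

theorem witt_coefficient_congruence_general (K : Type) [Field K] [NumberField K]
    (L : Type) [Field L] [NumberField L] [Algebra K L]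
    (ξ : IK K → 𝓞 L) (hξ : ξ ∈ WittSet K (𝓞 L))
    (a : IK K) (p : PrimeIdeal K)
    (P : Ideal (𝓞 L)) (hP : P.IsPrime)
    (hover : Ideal.comap (algebraMap (𝓞 K) (𝓞 L)) P = p.1) :
    ξ (p.toIK ^ (Ideal.inertiaDeg' p.1 P) * a) - ξ a ∈
      P ^ (1 + vIdeal p.1 (a : Ideal (𝓞 K)) /
        (Ideal.inertiaDeg' p.1 P)) := by
  obtain ⟨b, hb⟩ := p.exists_eq_pow_vIdeal_mul a
  have h := apply_pow_mul_sub_mem_pow_min p hover.ge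
    (pow_residueCard_pow_inertiaDeg'_sub_mem p hP hover) (vIdeal p.1 a + 1)
    ξ (Set.mem_iInter.mp hξ _) (vIdeal p.1 a) b
  rw [← hb, min_self] at h
  have hexp : 1 + vIdeal p.1 a / p.1.inertiaDeg' P ≤ vIdeal p.1 a + 1 := by
    have := Nat.div_le_self (vIdeal p.1 a) (p.1.inertiaDeg' P)
    omega
  exact Ideal.pow_le_pow_right hexp h

/-- for a finite extension `L/K` of number fields, a Witt vector
`ξ ∈ W_{O_K}(O_L)`, an ideal `a ∈ I_K`, a prime `p ∈ P_K`, and a prime `P` of `O_L`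
lying over `p` with inertia degree `f`, one has
`ξ_{p^f·a} ≡ ξ_a (mod P^{1+⌊v_p(a)/f⌋})`. -/
theorem witt_coefficient_congruence (K : Type) [Field K] [NumberField K]
    (L : Type) [Field L] [NumberField L] [Algebra K L] [FiniteDimensional K L]
    (ξ : IK K → 𝓞 L) (hξ : ξ ∈ WittSet K (𝓞 L))
    (a : IK K) (p : PrimeIdeal K)
    (P : Ideal (𝓞 L)) (hP : P.IsPrime)
    (hover : Ideal.comap (algebraMap (𝓞 K) (𝓞 L)) P = p.1) :
    ξ (p.toIK ^ (Ideal.inertiaDeg' p.1 P) * a) - ξ a ∈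
      P ^ (1 + vIdeal p.1 (a : Ideal (𝓞 K)) /
        (Ideal.inertiaDeg' p.1 P)) :=
  witt_coefficient_congruence_general K L ξ hξ a p P hP hover

end
end

section
/- Let L/K be a finite extension of number fields, ξ ∈ W_{O_K}(O_L) a Witt vector, p ∈ P_K a prime of O_K, and P a prime of O_L lying over p. If σ : O_L → O_L is a ring endomorphism satisfying σ(x) − x^{#k_p} ∈ P for all x ∈ O_L (e.g. the Frobenius automorphism at P when L/K is Galois and p is unramified in L), then ξ_{p·a} − σ(ξ_a) ∈ P for every a ∈ I_K. -/
open NumberField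

noncomputable section

/-- for `ξ ∈ W_{O_K}(O_L)`, a prime `p ∈ P_K`, a prime `P` of `O_L`
lying over `p`, and a ring endomorphism `σ` of `O_L` with `σ(x) ≡ x^{#k_p} (mod P)`
for all `x` (e.g. a Frobenius at `P`), one has `ξ_{p·a} − σ(ξ_a) ∈ P` for all
`a ∈ I_K`. -/
theorem shift_vs_frobenius (K : Type) [Field K] [NumberField K]
    (L : Type) [Field L] [NumberField L] [Algebra K L] [FiniteDimensional K L]
    (ξ : IK K → 𝓞 L) (hξ : ξ ∈ WittSet K (𝓞 L))
    (p : PrimeIdeal K) (P : Ideal (𝓞 L)) (hP : P.IsPrime)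
    (hover : Ideal.comap (algebraMap (𝓞 K) (𝓞 L)) P = p.1)
    (σ : 𝓞 L →+* 𝓞 L)
    (hσ : ∀ x : 𝓞 L, σ x - x ^ residueCard p.1 ∈ P) :
    ∀ a : IK K, ξ (p.toIK * a) - σ (ξ a) ∈ P := by
  intro a
  have h1 : ξ ∈ UnSet K (𝓞 L) 1 := Set.mem_iInter.mp hξ 1
  have h2 := h1.2 p
  have key : ∀ x : IK K → 𝓞 L, x ∈ idealMulSet p.1 (UnSet K (𝓞 L) 0) → x a ∈ P := by
    intro x hx
    refine Submodule.smul_induction_on hx ?_ ?_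
    · intro r hr m _
      have hmem : algebraMap (𝓞 K) (𝓞 L) r ∈ P := by
        rw [← hover] at hr; exact hr
      simpa [Algebra.smul_def] using Ideal.mul_mem_right (m a) P hmem
    · intro x y hx hy
      simpa using Ideal.add_mem P hx hy
  have h4 : ξ (p.toIK * a) - (ξ a) ^ residueCard p.1 ∈ P := by
    simpa [shift, Pi.sub_apply, Pi.pow_apply] using key _ h2
  have h5 := hσ (ξ a)
  have heq : ξ (p.toIK * a) - σ (ξ a) =
      (ξ (p.toIK * a) - (ξ a) ^ residueCard p.1) - (σ (ξ a) - (ξ a) ^ residueCard p.1) := by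
    ring
  rw [heq]
  exact Ideal.sub_mem P h4 h5

end
end
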